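/- Let Γ = (Γ₀, Γ₁, ν, τ) be a valued stable translation quiver such that ⟨τ⟩ is an admissible subgroup of the automorphism group of Γ, and let φ : Γ₀/⟨τ⟩ → ℕ₊ be an additive function on the valued graph (Γ₀/⟨τ⟩, d). Then f : Γ₀ → ℕ₊ defined by f(x) := φ([x]) is an additive function on Γ satisfying f ∘ τ = f. -/

import Mathlib

/-- A valued stable translation quiver `(Γ₀, Γ₁, ν, τ)`: the vertex set is `V`, the
arrow set `Γ₁ ⊆ Γ₀ × Γ₀` is given by the relation `Arrow`, `ν` is a valuation with
`Γ₁ = ν⁻¹(ℕ₊ × ℕ₊)`, the quiver has no loops and is locally finite, and `τ` is a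
translation satisfying `ν(τ(b),a) = Δ(ν(a,b))` for all arrows `(a,b)`. -/
structure ValuedStableTranslationQuiver (V : Type*) where
  /-- the arrow relation -/
  Arrow : V → V → Prop
  /-- the valuation -/
  nu : V → V → ℕ × ℕ
  /-- the translation -/
  tau : V ≃ V
  arrow_iff : ∀ x y, Arrow x y ↔ (0 < (nu x y).1 ∧ 0 < (nu x y).2)
  no_loops : ∀ x, ¬ Arrow x x
  locally_finite : ∀ x, {y | Arrow x y ∨ Arrow y x}.Finite
  tau_arrow : ∀ x y, Arrow (tau x) (tau y) ↔ Arrow x y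
  translation : ∀ a y, Arrow y a ↔ Arrow (tau a) y
  valued : ∀ a b, Arrow a b → nu (tau b) a = ((nu a b).2, (nu a b).1)

namespace ValuedStableTranslationQuiver

variable {V : Type*} (Q : ValuedStableTranslationQuiver V)

/-- the set of predecessors of a vertex is finite -/
theorem predsFinite (y : V) : {x | Q.Arrow x y}.Finite :=
  (Q.locally_finite y).subset fun _ hx => Or.inr hx

/-- the finset of predecessors `y⁻` of a vertex `y` -/
noncomputable def preds (y : V) : Finset V := (Q.predsFinite y).toFinset

/-- a function `f : Γ₀ → ℕ₀` is subadditive if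
`f(y) + f(τ(y)) ≥ ∑_{x ∈ y⁻} f(x)·pr₁(ν(x,y))` for all vertices `y` -/
def Subadditive (f : V → ℕ) : Prop :=
  ∀ y, ∑ x ∈ Q.preds y, f x * (Q.nu x y).1 ≤ f y + f (Q.tau y)

/-- a function `f : Γ₀ → ℕ₀` is additive if
`f(y) + f(τ(y)) = ∑_{x ∈ y⁻} f(x)·pr₁(ν(x,y))` for all vertices `y` -/
def Additive (f : V → ℕ) : Prop :=
  ∀ y, f y + f (Q.tau y) = ∑ x ∈ Q.preds y, f x * (Q.nu x y).1

/-- connectedness of the underlying undirected graph -/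
def Connected : Prop :=
  ∀ x y : V, Relation.ReflTransGen (fun a b => Q.Arrow a b ∨ Q.Arrow b a) x y

end ValuedStableTranslationQuiver


namespace ValuedStableTranslationQuiver

variable {V : Type*} (Q : ValuedStableTranslationQuiver V)

/-- the `⟨τ⟩`-orbit equivalence relation on the vertices -/
def tauSetoid : Setoid V where
  r a b := ∃ k : ℤ, (Q.tau ^ k) a = b
  iseqv := by
    constructor
    · exact fun a => ⟨0, by simp⟩
    · rintro a b ⟨k, rfl⟩
      exact ⟨-k, by rw [← Equiv.Perm.mul_apply, ← zpow_add]; simp⟩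
    · rintro a b c ⟨k, rfl⟩ ⟨l, rfl⟩
      exact ⟨l + k, by rw [zpow_add, Equiv.Perm.mul_apply]⟩

/-- `⟨τ⟩` is an admissible subgroup of `Aut(Γ)`. -/
def TauAdmissible : Prop :=
  ∀ x y : V,
    (Set.range (fun k : ℤ => (Q.tau ^ k) x) ∩ ({y} ∪ {z | Q.Arrow y z})).Subsingleton ∧
    (Set.range (fun k : ℤ => (Q.tau ^ k) x) ∩ ({y} ∪ {z | Q.Arrow z y})).Subsingleton

end ValuedStableTranslationQuiver

namespace ValuedStableTranslationQuiver

variable {V : Type*} (Q : ValuedStableTranslationQuiver V)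

open Classical in
/-- The valued-graph structure `d` on the set of `⟨τ⟩`-orbits `Γ₀/⟨τ⟩`:
`d([x],[y]) = pr₁(ν(a,b))` if there are representatives `a ∈ [x]`, `b ∈ [y]` with an
arrow `a → b`, and `d([x],[y]) = 0` otherwise.  (When `⟨τ⟩` is admissible this does not
depend on the choice of representatives.) -/
noncomputable def dOrb : Quotient (tauSetoid Q) → Quotient (tauSetoid Q) → ℕ :=
  fun c c' =>
    if h : ∃ a b : V, Quotient.mk (tauSetoid Q) a = c ∧ Quotient.mk (tauSetoid Q) b = c' ∧
        Q.Arrow a b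
    then (Q.nu h.choose h.choose_spec.choose).1
    else 0

end ValuedStableTranslationQuiver

/-!
Admissibility of `⟨τ⟩` has two consequences. First, an arrow `a → b` is determined by its
source orbit and its target, so `ν` is constant along `⟨τ⟩`-orbits of arrows and `d` is
computed by any representing arrow. Second, distinct predecessors of a vertex `y` lie in
distinct orbits, so the orbit sum `∑_c φ(c) d(c,[y])` is exactly the sum over `y⁻`.
Since `[τ y] = [y]`, the additivity `2φ([y]) = ∑_c φ(c) d(c,[y])` of `φ` then reads
`f(y) + f(τ y) = ∑_{x ∈ y⁻} f(x) pr₁(ν(x,y))`.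
-/

namespace ValuedStableTranslationQuiver

variable {V : Type*} (Q : ValuedStableTranslationQuiver V)

theorem mem_preds {x y : V} : x ∈ Q.preds y ↔ Q.Arrow x y := by
  simp [preds]

theorem mk_tau (x : V) : Quotient.mk (tauSetoid Q) (Q.tau x) = Quotient.mk (tauSetoid Q) x :=
  Quotient.sound ⟨-1, by simp⟩

theorem arrow_symm_tau {a b : V} : Q.Arrow (Q.tau.symm a) (Q.tau.symm b) ↔ Q.Arrow a b := by
  simpa using (Q.tau_arrow (Q.tau.symm a) (Q.tau.symm b)).symm

theorem nu_tau {a b : V} (h : Q.Arrow a b) : Q.nu (Q.tau a) (Q.tau b) = Q.nu a b := by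
  have h' := Q.valued (Q.tau b) a ((Q.translation b a).mp h)
  rw [Q.valued a b h] at h'
  simpa using h'

theorem arrow_zpow_tau (k : ℤ) {a b : V} :
    Q.Arrow ((Q.tau ^ k) a) ((Q.tau ^ k) b) ↔ Q.Arrow a b := by
  induction k using Int.induction_on generalizing a b with
  | zero => simp
  | succ k ih =>
    simpa [zpow_add_one] using (ih (a := Q.tau a) (b := Q.tau b)).trans (Q.tau_arrow a b)
  | pred k ih =>
    simpa [zpow_sub_one] using (ih (a := Q.tau.symm a) (b := Q.tau.symm b)).trans Q.arrow_symm_tau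

theorem nu_zpow_tau (k : ℤ) {a b : V} (h : Q.Arrow a b) :
    Q.nu ((Q.tau ^ k) a) ((Q.tau ^ k) b) = Q.nu a b := by
  induction k using Int.induction_on generalizing a b with
  | zero => simp
  | succ k ih =>
    simpa [zpow_add_one] using (ih ((Q.tau_arrow a b).mpr h)).trans (Q.nu_tau h)
  | pred k ih =>
    have h' := Q.arrow_symm_tau.mpr h
    simpa [zpow_sub_one] using (ih h').trans (by simpa using (Q.nu_tau h').symm)

variable {Q}

theorem nu_eq_of_arrow_of_rel (hadm : Q.TauAdmissible) {a b x y : V}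
    (hax : (tauSetoid Q).r a x) (hby : (tauSetoid Q).r b y)
    (hab : Q.Arrow a b) (hxy : Q.Arrow x y) : Q.nu a b = Q.nu x y := by
  obtain ⟨k, rfl⟩ := hax
  obtain ⟨l, rfl⟩ := hby
  have hk : Q.Arrow ((Q.tau ^ k) a) ((Q.tau ^ k) b) := (Q.arrow_zpow_tau k).mpr hab
  have hkl : (Q.tau ^ k) b = (Q.tau ^ l) b :=
    (hadm b ((Q.tau ^ k) a)).1 ⟨⟨k, rfl⟩, Or.inr hk⟩ ⟨⟨l, rfl⟩, Or.inr hxy⟩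
  rw [← hkl, Q.nu_zpow_tau k hab]

theorem eq_of_arrow_of_rel (hadm : Q.TauAdmissible) {x x' y : V}
    (hx : Q.Arrow x y) (hx' : Q.Arrow x' y) (h : (tauSetoid Q).r x x') : x = x' :=
  (hadm x y).2 ⟨⟨0, by simp⟩, Or.inr hx⟩ ⟨h, Or.inr hx'⟩

theorem dOrb_mk_of_arrow (hadm : Q.TauAdmissible) {x y : V} (hxy : Q.Arrow x y) :
    dOrb Q (Quotient.mk _ x) (Quotient.mk _ y) = (Q.nu x y).1 := by
  have hex : ∃ a b : V, Quotient.mk (tauSetoid Q) a = Quotient.mk _ x ∧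
      Quotient.mk (tauSetoid Q) b = Quotient.mk _ y ∧ Q.Arrow a b :=
    ⟨x, y, rfl, rfl, hxy⟩
  rw [dOrb, dif_pos hex]
  obtain ⟨ha, hb, hab⟩ := hex.choose_spec.choose_spec
  rw [nu_eq_of_arrow_of_rel hadm (Quotient.exact ha) (Quotient.exact hb) hab hxy]

theorem exists_mem_preds_of_dOrb_ne_zero {c : Quotient (tauSetoid Q)} {y : V}
    (hc : dOrb Q c (Quotient.mk _ y) ≠ 0) : ∃ x ∈ Q.preds y, Quotient.mk _ x = c := by
  obtain ⟨a, b, rfl, hb, hab⟩ : ∃ a b : V, Quotient.mk (tauSetoid Q) a = c ∧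
      Quotient.mk (tauSetoid Q) b = Quotient.mk _ y ∧ Q.Arrow a b := by
    by_contra h
    exact hc (dif_neg h)
  obtain ⟨l, rfl⟩ := Quotient.exact hb
  exact ⟨(Q.tau ^ l) a, Q.mem_preds.mpr ((Q.arrow_zpow_tau l).mpr hab),
    (Quotient.sound (show (tauSetoid Q).r a _ from ⟨l, rfl⟩)).symm⟩

theorem finsum_mul_dOrb_mk (hadm : Q.TauAdmissible) (φ : Quotient (tauSetoid Q) → ℕ) (y : V) :
    ∑ᶠ c, φ c * dOrb Q c (Quotient.mk _ y) =
      ∑ x ∈ Q.preds y, φ (Quotient.mk _ x) * (Q.nu x y).1 := by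
  classical
  have hsupp : (Function.support fun c => φ c * dOrb Q c (Quotient.mk _ y)) ⊆
      ((Q.preds y).image (Quotient.mk (tauSetoid Q)) : Finset _) := fun c hc => by
    simpa using exists_mem_preds_of_dOrb_ne_zero (right_ne_zero_of_mul hc)
  rw [finsum_eq_finsetSum_of_support_subset _ hsupp, Finset.sum_image]
  · exact Finset.sum_congr rfl fun x hx => by rw [dOrb_mk_of_arrow hadm (Q.mem_preds.mp hx)]
  · intro x hx x' hx' hxx'
    exact eq_of_arrow_of_rel hadm (Q.mem_preds.mp hx) (Q.mem_preds.mp hx') (Quotient.exact hxx')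

end ValuedStableTranslationQuiver

open ValuedStableTranslationQuiver in
theorem statement5_general {V : Type*} (Q : ValuedStableTranslationQuiver V)
    (hadm : Q.TauAdmissible)
    (φ : Quotient (tauSetoid Q) → ℕ)
    (hadd : ∀ c' : Quotient (tauSetoid Q), 2 * φ c' = ∑ᶠ c : Quotient (tauSetoid Q),
      φ c * dOrb Q c c') :
    Q.Additive (fun x : V => φ (Quotient.mk (tauSetoid Q) x)) ∧
    ∀ x : V, φ (Quotient.mk (tauSetoid Q) (Q.tau x)) = φ (Quotient.mk (tauSetoid Q) x) := by
  refine ⟨fun y => ?_, fun x => congrArg φ (Q.mk_tau x)⟩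
  dsimp only
  rw [Q.mk_tau y, ← two_mul, hadd, finsum_mul_dOrb_mk hadm]

open ValuedStableTranslationQuiver in
/-- Lemma 1.3(3): if `⟨τ⟩` is admissible and `φ : Γ₀/⟨τ⟩ → ℕ₊` is an additive function
on the orbit valued graph, then `f(x) := φ([x])` is an additive function on `Γ`
satisfying `f ∘ τ = f`. -/
theorem statement5 {V : Type*} (Q : ValuedStableTranslationQuiver V)
    (hadm : Q.TauAdmissible)
    (φ : Quotient (tauSetoid Q) → ℕ) (hpos : ∀ c, 0 < φ c)
    (hadd : ∀ c' : Quotient (tauSetoid Q), 2 * φ c' = ∑ᶠ c : Quotient (tauSetoid Q),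
      φ c * dOrb Q c c') :
    Q.Additive (fun x : V => φ (Quotient.mk (tauSetoid Q) x)) ∧
    ∀ x : V, φ (Quotient.mk (tauSetoid Q) (Q.tau x)) = φ (Quotient.mk (tauSetoid Q) x) :=
  statement5_general Q hadm φ hadd
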